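/- (Bäcklund transformation s₁ for Painlevé III′.) Let (q, p, H) solve the Painlevé III′ Hamiltonian system with parameters v1, v2 ∈ ℂ on an open set U ⊆ ℂ with 0 ∉ U, and assume p(s) ≠ 1 for all s ∈ U. Define q̃(s) := q(s) + (v2 − v1)/(2·(p(s) − 1)) and p̃(s) := p(s). Then (q̃, p̃) solves the Painlevé III′ Hamiltonian system with parameters (v2, v1) on U, and its Hamiltonian H̃ satisfies s·H̃(s) = s·H(s) − (v2² − v1²)/4 for all s ∈ U. -/

import Mathlib

open Complex

/-- `(q, p, H)` solves the Painlevé III′ Hamiltonian system with parameters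
`v1, v2` on an open set `U ⊆ ℂ` with `0 ∉ U`. -/
def SolvesPIII' (v1 v2 : ℂ) (U : Set ℂ) (q p H : ℂ → ℂ) : Prop :=
  IsOpen U ∧ (0 : ℂ) ∉ U ∧
    DifferentiableOn ℂ q U ∧ DifferentiableOn ℂ p U ∧
    (∀ s ∈ U, s * H s =
      q s ^ 2 * p s ^ 2 - (q s ^ 2 + v1 * q s - s) * p s
        + (1 / 2) * (v1 + v2) * q s) ∧
    (∀ s ∈ U, s * deriv q s = 2 * q s ^ 2 * p s - q s ^ 2 - v1 * q s + s) ∧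
    (∀ s ∈ U, s * deriv p s =
      -2 * q s * p s ^ 2 + 2 * q s * p s + v1 * p s - (1 / 2) * (v1 + v2))

/-!
The transformation only moves `q`, by `(v2 - v1) / (2 (p - 1))`, and this shift is chosen so that
it exchanges the roles of `v1` and `v2` in the equation for `p'`; the equation for `q'` and the
Hamiltonian then transform correctly by direct computation, once `q'` of the shifted function is
computed with the chain rule and `s p'` is replaced by the right-hand side of its equation.
-/

open Filter

namespace PainleveIII'

section Algebra

variable {K : Type*} [Field K]

/-- `s · H(s)` as a function of `s, q, p`. -/
def scaledHamiltonian (v1 v2 s q p : K) : K :=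
  q ^ 2 * p ^ 2 - (q ^ 2 + v1 * q - s) * p + (1 / 2) * (v1 + v2) * q

def qFlow (v1 s q p : K) : K :=
  2 * q ^ 2 * p - q ^ 2 - v1 * q + s

def pFlow (v1 v2 q p : K) : K :=
  -2 * q * p ^ 2 + 2 * q * p + v1 * p - (1 / 2) * (v1 + v2)

def backlundShift (v1 v2 p : K) : K :=
  (v2 - v1) / (2 * (p - 1))

variable [NeZero (2 : K)] {p : K}

theorem pFlow_add_backlundShift (v1 v2 q : K) (hp : p ≠ 1) :
    pFlow v2 v1 (q + backlundShift v1 v2 p) p = pFlow v1 v2 q p := by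
  have : p - 1 ≠ 0 := sub_ne_zero.mpr hp
  unfold pFlow backlundShift
  field_simp
  ring

theorem qFlow_add_backlundShift (v1 v2 s q : K) (hp : p ≠ 1) :
    qFlow v2 s (q + backlundShift v1 v2 p) p =
      qFlow v1 s q p - (v2 - v1) * pFlow v1 v2 q p / (2 * (p - 1) ^ 2) := by
  have : p - 1 ≠ 0 := sub_ne_zero.mpr hp
  unfold qFlow pFlow backlundShift
  field_simp
  ring

theorem scaledHamiltonian_add_backlundShift (v1 v2 s q : K) (hp : p ≠ 1) :
    scaledHamiltonian v2 v1 s (q + backlundShift v1 v2 p) p =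
      scaledHamiltonian v1 v2 s q p - (v2 ^ 2 - v1 ^ 2) / 4 := by
  have : p - 1 ≠ 0 := sub_ne_zero.mpr hp
  have : (4 : K) ≠ 0 := by
    rw [← two_add_two_eq_four, ← two_mul]
    exact mul_ne_zero two_ne_zero two_ne_zero
  unfold scaledHamiltonian backlundShift
  field_simp
  ring

end Algebra

theorem hasDerivAt_add_backlundShift {𝕜 : Type*} [NontriviallyNormedField 𝕜] [NeZero (2 : 𝕜)]
    {q p : 𝕜 → 𝕜} {q' p' s : 𝕜} (v1 v2 : 𝕜) (hq : HasDerivAt q q' s) (hp : HasDerivAt p p' s)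
    (hp1 : p s ≠ 1) :
    HasDerivAt (fun t => q t + backlundShift v1 v2 (p t))
      (q' - (v2 - v1) * p' / (2 * (p s - 1) ^ 2)) s := by
  have hp1' : p s - 1 ≠ 0 := sub_ne_zero.mpr hp1
  have h := hq.add ((((hp.sub_const 1).const_mul 2).inv
    (mul_ne_zero two_ne_zero hp1')).const_mul (v2 - v1))
  refine (h.congr_deriv (by field_simp; ring)).congr_of_eventuallyEq (.of_forall fun t => ?_)
  simp [backlundShift, div_eq_mul_inv]

theorem solvesPIII'_iff {v1 v2 : ℂ} {U : Set ℂ} {q p H : ℂ → ℂ} :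
    SolvesPIII' v1 v2 U q p H ↔
      IsOpen U ∧ (0 : ℂ) ∉ U ∧ DifferentiableOn ℂ q U ∧ DifferentiableOn ℂ p U ∧
        (∀ s ∈ U, s * H s = scaledHamiltonian v1 v2 s (q s) (p s)) ∧
        (∀ s ∈ U, s * deriv q s = qFlow v1 s (q s) (p s)) ∧
        (∀ s ∈ U, s * deriv p s = pFlow v1 v2 (q s) (p s)) :=
  Iff.rfl

end PainleveIII'

open PainleveIII'

/-- Bäcklund transformation `s₁` for Painlevé III′:
`q̃ = q + (v2−v1)/(2(p−1))`, `p̃ = p` solves the system with parameters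
`(v2, v1)`, and `s·H̃(s) = s·H(s) − (v2² − v1²)/4`. -/
theorem painleveIIIprime_backlund_s1 (v1 v2 : ℂ) (U : Set ℂ)
    (q p H : ℂ → ℂ)
    (hsol : SolvesPIII' v1 v2 U q p H)
    (hp1 : ∀ s ∈ U, p s ≠ 1)
    (qt pt : ℂ → ℂ)
    (hqt : ∀ s ∈ U, qt s = q s + (v2 - v1) / (2 * (p s - 1)))
    (hpt : ∀ s ∈ U, pt s = p s) :
    ∃ Ht : ℂ → ℂ,
      SolvesPIII' v2 v1 U qt pt Ht ∧
      ∀ s ∈ U, s * Ht s = s * H s - (v2 ^ 2 - v1 ^ 2) / 4 := by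
  obtain ⟨hU, h0, hq, hp, hH, hq', hp'⟩ := solvesPIII'_iff.mp hsol
  have hs0 : ∀ s ∈ U, s ≠ 0 := fun s hs h => h0 (h ▸ hs)
  have hqt' : ∀ s ∈ U, HasDerivAt qt (deriv q s - (v2 - v1) * deriv p s / (2 * (p s - 1) ^ 2)) s :=
    fun s hs => (hasDerivAt_add_backlundShift v1 v2
      (hq.differentiableAt (hU.mem_nhds hs)).hasDerivAt
      (hp.differentiableAt (hU.mem_nhds hs)).hasDerivAt (hp1 s hs)).congr_of_eventuallyEq
      (eventually_of_mem (hU.mem_nhds hs) hqt)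
  have hpt' : ∀ s ∈ U, deriv pt s = deriv p s := fun s hs =>
    EventuallyEq.deriv_eq (eventually_of_mem (hU.mem_nhds hs) hpt)
  have hHt : ∀ s ∈ U, scaledHamiltonian v2 v1 s (qt s) (pt s) =
      scaledHamiltonian v1 v2 s (q s) (p s) - (v2 ^ 2 - v1 ^ 2) / 4 := fun s hs => by
    rw [hqt s hs, hpt s hs, ← backlundShift, scaledHamiltonian_add_backlundShift _ _ _ _ (hp1 s hs)]
  refine ⟨fun s => scaledHamiltonian v2 v1 s (qt s) (pt s) / s, solvesPIII'_iff.mpr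
    ⟨hU, h0, fun s hs => (hqt' s hs).differentiableAt.differentiableWithinAt, hp.congr hpt,
      fun s hs => mul_div_cancel₀ _ (hs0 s hs), fun s hs => ?_, fun s hs => ?_⟩,
    fun s hs => by rw [mul_div_cancel₀ _ (hs0 s hs), hHt s hs, hH s hs]⟩
  · rw [(hqt' s hs).deriv, hqt s hs, hpt s hs, ← backlundShift,
      qFlow_add_backlundShift _ _ _ _ (hp1 s hs), ← hq' s hs, ← hp' s hs]
    ring
  · rw [hpt' s hs, hqt s hs, hpt s hs, ← backlundShift, pFlow_add_backlundShift _ _ _ (hp1 s hs),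
      hp' s hs]
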